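/- arXiv:1603.03413 — 8 statements merged into one kernel-verified Lean document; each statement's English description precedes it below -/
import Mathlib

section
/- The characteristic polynomial of the 3×3 matrix A⁺ = [[-γβ, (1/2)γαμ - ε, -(1/2)γαμ], [β, -(1/2)αμ, (1/2)αμ], [β, -(1/2)(α-2)μ, (1/2)(α-2)μ]] equals λ³ + (βγ + μ)λ² + (βε + βγμ)λ + βεμ. -/
open Polynomial

theorem charpoly_Aplus (α β γ μ ε : ℝ) :
    (Matrix.charpoly
      (!![-γ*β, (1/2)*γ*α*μ - ε, -(1/2)*γ*α*μ;
          β, -(1/2)*α*μ, (1/2)*α*μ;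
          β, -(1/2)*(α-2)*μ, (1/2)*(α-2)*μ] : Matrix (Fin 3) (Fin 3) ℝ)) =
    X^3 + C (β*γ + μ) * X^2 + C (β*ε + β*γ*μ) * X + C (β*ε*μ) := by
  rw [Matrix.charpoly, Matrix.det_fin_three]
  simp [Matrix.charmatrix_apply, Matrix.one_apply, Matrix.diagonal, Matrix.vecHead, Matrix.vecTail]
  ring_nf
  simp only [← C_mul, ← C_add, ← C_sub, ← C_neg]
  ring_nf
  have h : (C (1/2:ℝ)) * C 2 = (1:ℝ[X]) := by rw [← C_mul]; norm_num
  linear_combination (X * C γ * C β * C μ + X^2 * C μ) * h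
end

section
/- For all positive real numbers β, γ, μ, ε and α ∈ (0,1), every eigenvalue of the matrix A⁺ = [[-γβ, (1/2)γαμ - ε, -(1/2)γαμ], [β, -(1/2)αμ, (1/2)αμ], [β, -(1/2)(α-2)μ, (1/2)(α-2)μ]] has strictly negative real part (i.e., A⁺ is Hurwitz). -/
/-- Routh–Hurwitz criterion for a monic cubic with positive coefficients. -/
lemma cubic_routh (a b c : ℝ) (ha : 0 < a) (hb : 0 < b) (hc : 0 < c)
    (hab : c < a * b) (z : ℂ)
    (hz : z^3 + (a:ℂ)*z^2 + (b:ℂ)*z + (c:ℂ) = 0) : z.re < 0 := by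
  by_contra hx
  push_neg at hx
  have h1 := congrArg Complex.re hz
  have h2 := congrArg Complex.im hz
  simp only [Complex.add_re, Complex.add_im, Complex.mul_re, Complex.mul_im,
    Complex.ofReal_re, Complex.ofReal_im, Complex.zero_re, Complex.zero_im,
    pow_succ, pow_zero, one_mul, Complex.one_re, Complex.one_im] at h1 h2
  have h1' : z.re^3 - 3*z.re*z.im^2 + a*z.re^2 - a*z.im^2 + b*z.re + c = 0 := by
    linear_combination h1
  have h2' : z.im * (3*z.re^2 - z.im^2 + 2*a*z.re + b) = 0 := by linear_combination h2
  rcases mul_eq_zero.mp h2' with hy | hy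
  · rw [hy] at h1'
    nlinarith [mul_nonneg (mul_nonneg hx hx) hx, mul_nonneg (mul_nonneg ha.le hx) hx,
      mul_nonneg hb.le hx]
  · have key : -8*z.re^3 - 8*a*z.re^2 - 2*(b+a^2)*z.re + (c - a*b) = 0 := by
      linear_combination h1' - (3*z.re + a)*hy
    nlinarith [mul_nonneg (mul_nonneg hx hx) hx, mul_nonneg (mul_nonneg ha.le hx) hx,
      mul_nonneg (add_pos hb (mul_pos ha ha)).le hx]

theorem Aplus_hurwitz (α β γ μ ε : ℝ) (hβ : 0 < β) (hγ : 0 < γ) (hμ : 0 < μ)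
    (hε : 0 < ε) (hα : α ∈ Set.Ioo (0:ℝ) 1) :
    ∀ z ∈ spectrum ℂ
      ((!![-γ*β, (1/2)*γ*α*μ - ε, -(1/2)*γ*α*μ;
           β, -(1/2)*α*μ, (1/2)*α*μ;
           β, -(1/2)*(α-2)*μ, (1/2)*(α-2)*μ] : Matrix (Fin 3) (Fin 3) ℝ).map
        (Complex.ofReal)),
      z.re < 0 := by
  intro z hz
  rw [spectrum.mem_iff] at hz
  have hd : (algebraMap ℂ (Matrix (Fin 3) (Fin 3) ℂ) z -
      (!![-γ*β, (1/2)*γ*α*μ - ε, -(1/2)*γ*α*μ;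
           β, -(1/2)*α*μ, (1/2)*α*μ;
           β, -(1/2)*(α-2)*μ, (1/2)*(α-2)*μ] : Matrix (Fin 3) (Fin 3) ℝ).map
        (Complex.ofReal)).det = 0 := by
    by_contra hd
    exact hz ((Matrix.isUnit_iff_isUnit_det _).2 (isUnit_iff_ne_zero.2 hd))
  rw [Matrix.det_fin_three] at hd
  simp only [Matrix.sub_apply, Matrix.map_apply, Matrix.algebraMap_matrix_apply,
    Matrix.cons_val', Matrix.cons_val_zero, Matrix.cons_val_one, Matrix.head_cons,
    Matrix.empty_val', Matrix.cons_val_fin_one,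
    Matrix.head_fin_const, Matrix.cons_val_two, Matrix.tail_cons,
    Algebra.algebraMap_self, RingHom.id_apply,
    Matrix.of_apply, if_true, if_false] at hd
  push_cast at hd
  have hchar : z^3 + ((γ*β+μ : ℝ) : ℂ)*z^2 + ((β*(γ*μ+ε) : ℝ) : ℂ)*z + ((β*ε*μ : ℝ) : ℂ) = 0 := by
    push_cast
    linear_combination hd
  refine cubic_routh (γ*β+μ) (β*(γ*μ+ε)) (β*ε*μ) ?_ ?_ ?_ ?_ z hchar
  · positivity
  · positivity
  · positivity
  · nlinarith [mul_pos (mul_pos hγ hβ) (mul_pos hβ (mul_pos hγ hμ)),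
      mul_pos (mul_pos hγ hβ) (mul_pos hβ hε), mul_pos hμ (mul_pos hβ (mul_pos hγ hμ))]
end

section
/- Let β, γ, μ, ε > 0 and α ∈ (0,1) satisfy (βγ/μ + (1-α))·(γμ/ε + 1) > 1. Then the matrix A⁻ = [[-γβ, -(1/2)γαμ - ε, -(1/2)γαμ], [β, (1/2)αμ, (1/2)αμ], [β, (1/2)(α-2)μ, (1/2)(α-2)μ]] is Hurwitz. -/
/-!
The characteristic polynomial of `A⁻` is `z³ + (γβ + (1 - α)μ) z² + β(ε + γμ) z + εβμ`, and the
hypothesis on the parameters is exactly the Routh–Hurwitz condition `a b > c` for this cubic.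
-/

open Matrix

/-- Routh–Hurwitz criterion for a monic real cubic. -/
theorem Complex.re_neg_of_cubic_eq_zero {a b c : ℝ} (ha : 0 < a) (hc : 0 < c) (habc : c < a * b)
    {z : ℂ} (hz : z ^ 3 + a * z ^ 2 + b * z + c = 0) : z.re < 0 := by
  have hb : 0 < b := pos_of_mul_pos_right (hc.trans habc) ha.le
  set x := z.re
  set y := z.im
  have hre : x ^ 3 - 3 * x * y ^ 2 + a * (x ^ 2 - y ^ 2) + b * x + c = 0 := by
    have := congrArg Complex.re hz
    simp only [pow_succ, pow_zero, one_mul, Complex.add_re, Complex.mul_re, Complex.mul_im,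
      Complex.ofReal_re, Complex.ofReal_im, Complex.zero_re] at this
    linear_combination this
  have him : y * (3 * x ^ 2 - y ^ 2 + 2 * a * x + b) = 0 := by
    have := congrArg Complex.im hz
    simp only [pow_succ, pow_zero, one_mul, Complex.add_im, Complex.mul_re, Complex.mul_im,
      Complex.ofReal_re, Complex.ofReal_im, Complex.zero_im] at this
    linear_combination this
  by_contra! hx
  rcases mul_eq_zero.mp him with hy | hy
  · rw [hy] at hre
    nlinarith [pow_nonneg hx 3, mul_nonneg (mul_nonneg ha.le hx) hx, mul_nonneg hb.le hx]
  -- Using `y² = 3x² + 2ax + b`, the real part is `-2x((2x + a)² + b) - (ab - c)`.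
  · nlinarith [mul_nonneg hx (sq_nonneg (2 * x + a)), mul_nonneg hx hb.le]

namespace Matrix

variable {R : Type*} [CommRing R]

def secondInvariant (A : Matrix (Fin 3) (Fin 3) R) : R :=
  A 0 0 * A 1 1 - A 0 1 * A 1 0 + A 0 0 * A 2 2 - A 0 2 * A 2 0 + A 1 1 * A 2 2 - A 1 2 * A 2 1

theorem eval_charpoly_fin_three (A : Matrix (Fin 3) (Fin 3) R) (t : R) :
    A.charpoly.eval t = t ^ 3 - A.trace * t ^ 2 + A.secondInvariant * t - A.det := by
  rw [eval_charpoly, det_fin_three, det_fin_three, trace_fin_three, secondInvariant]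
  simp
  ring

theorem re_neg_of_mem_spectrum_fin_three {A : Matrix (Fin 3) (Fin 3) ℝ} (htr : A.trace < 0)
    (hdet : A.det < 0) (hRH : A.trace * A.secondInvariant < A.det) {z : ℂ}
    (hz : z ∈ spectrum ℂ (A.map Complex.ofReal)) : z.re < 0 := by
  rw [mem_spectrum_iff_isRoot_charpoly, Polynomial.IsRoot, eval_charpoly_fin_three] at hz
  refine Complex.re_neg_of_cubic_eq_zero (neg_pos.2 htr) (neg_pos.2 hdet) (b := A.secondInvariant)
    (by linarith) ?_
  rw [← hz]
  simp [trace_fin_three, det_fin_three, secondInvariant]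
  ring

end Matrix

noncomputable def Aminus (α β γ μ ε : ℝ) : Matrix (Fin 3) (Fin 3) ℝ :=
  !![-γ*β, -(1/2)*γ*α*μ - ε, -(1/2)*γ*α*μ;
     β, (1/2)*α*μ, (1/2)*α*μ;
     β, (1/2)*(α-2)*μ, (1/2)*(α-2)*μ]

section Aminus

variable (α β γ μ ε : ℝ)

theorem trace_Aminus : (Aminus α β γ μ ε).trace = -(γ * β + (1 - α) * μ) := by
  simp [Aminus, trace_fin_three]
  ring

theorem det_Aminus : (Aminus α β γ μ ε).det = -(ε * β * μ) := by
  simp [Aminus, det_fin_three]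
  ring

theorem secondInvariant_Aminus :
    (Aminus α β γ μ ε).secondInvariant = β * (ε + γ * μ) := by
  simp [Aminus, secondInvariant]
  ring

end Aminus

theorem Aminus_hurwitz (α β γ μ ε : ℝ) (hβ : 0 < β) (hγ : 0 < γ) (hμ : 0 < μ)
    (hε : 0 < ε) (hα : α ∈ Set.Ioo (0:ℝ) 1)
    (hcond : (β*γ/μ + (1-α)) * (γ*μ/ε + 1) > 1) :
    ∀ z ∈ spectrum ℂ
      ((!![-γ*β, -(1/2)*γ*α*μ - ε, -(1/2)*γ*α*μ;
           β, (1/2)*α*μ, (1/2)*α*μ;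
           β, (1/2)*(α-2)*μ, (1/2)*(α-2)*μ] : Matrix (Fin 3) (Fin 3) ℝ).map
        (Complex.ofReal)),
      z.re < 0 := by
  intro z hz
  have h1α : 0 < 1 - α := sub_pos.2 hα.2
  have hRH : μ * ε < (β * γ + (1 - α) * μ) * (γ * μ + ε) := by
    rw [gt_iff_lt, div_add' _ _ _ hμ.ne', div_add' _ _ _ hε.ne', div_mul_div_comm,
      one_lt_div (by positivity)] at hcond
    linarith
  refine re_neg_of_mem_spectrum_fin_three (A := Aminus α β γ μ ε) ?_ ?_ ?_ hz
  · rw [trace_Aminus, neg_lt_zero]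
    positivity
  · rw [det_Aminus, neg_lt_zero]
    positivity
  · rw [trace_Aminus, det_Aminus, secondInvariant_Aminus]
    nlinarith [mul_lt_mul_of_pos_left hRH hβ]
end

section
/- Let a₀ > 0 and a₁, a₂, a₃ be real numbers. All roots of the cubic a₀λ³ + a₁λ² + a₂λ + a₃ = 0 have strictly negative real part if and only if a₁ > 0, a₂ > 0, a₃ > 0 and a₁a₂ > a₀a₃. -/
lemma cubic_real_root (a₀ a₁ a₂ a₃ : ℝ) (h₀ : 0 < a₀) :
    ∃ r : ℝ, a₀ * r^3 + a₁ * r^2 + a₂ * r + a₃ = 0 := by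
  obtain ⟨M, hM1, haM⟩ : ∃ M : ℝ, 1 ≤ M ∧ |a₁| + |a₂| + |a₃| < a₀ * M := by
    refine ⟨1 + (|a₁| + |a₂| + |a₃| + 1)/a₀, ?_, ?_⟩
    · have : 0 ≤ (|a₁| + |a₂| + |a₃| + 1)/a₀ := by positivity
      linarith
    · rw [mul_add, mul_one, mul_div_cancel₀ _ h₀.ne']
      linarith
  set f : ℝ → ℝ := fun t => a₀ * t^3 + a₁ * t^2 + a₂ * t + a₃ with hf
  have hc : ContinuousOn f (Set.Icc (-M) M) := by
    apply Continuous.continuousOn; fun_prop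
  have hMpos : 0 < M := by linarith
  have key : a₀ * M^3 > (|a₁| + |a₂| + |a₃|) * M^2 := by
    nlinarith [mul_lt_mul_of_pos_right haM (pow_pos hMpos 2)]
  have h2 : |a₁| * M^2 + |a₂| * M + |a₃| ≤ (|a₁| + |a₂| + |a₃|) * M^2 := by
    nlinarith [abs_nonneg a₂, abs_nonneg a₃,
      mul_nonneg (abs_nonneg a₂) (mul_nonneg (by linarith : (0:ℝ) ≤ M - 1) hMpos.le),
      mul_nonneg (abs_nonneg a₃) (mul_nonneg (by linarith : (0:ℝ) ≤ M - 1) (by linarith : (0:ℝ) ≤ M + 1))]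
  have h1 : f M > 0 := by
    have h3 : -(|a₁| * M^2) ≤ a₁ * M^2 := by nlinarith [neg_abs_le a₁, sq_nonneg M]
    have h4 : -(|a₂| * M) ≤ a₂ * M := by nlinarith [neg_abs_le a₂]
    have h5 : -|a₃| ≤ a₃ := neg_abs_le a₃
    show a₀ * M^3 + a₁ * M^2 + a₂ * M + a₃ > 0
    nlinarith
  have h1' : f (-M) < 0 := by
    have h3 : a₁ * M^2 ≤ |a₁| * M^2 := by nlinarith [le_abs_self a₁, sq_nonneg M]
    have h4 : -(a₂ * M) ≤ |a₂| * M := by nlinarith [neg_abs_le a₂]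
    have h5 : a₃ ≤ |a₃| := le_abs_self a₃
    show a₀ * (-M)^3 + a₁ * (-M)^2 + a₂ * (-M) + a₃ < 0
    nlinarith
  obtain ⟨r, _, hr⟩ := intermediate_value_Icc (by linarith : -M ≤ M) hc ⟨h1'.le, h1.le⟩
  exact ⟨r, hr⟩

lemma quad_complex_root (A B C u v : ℝ)
    (h1 : A*(u^2 - v^2) + B*u + C = 0) (h2 : v*(2*A*u + B) = 0) :
    (A:ℂ) * ((u:ℂ) + (v:ℂ)*Complex.I)^2 + (B:ℂ) * ((u:ℂ) + (v:ℂ)*Complex.I) + (C:ℂ) = 0 := by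
  apply Complex.ext
  · simp [pow_two, Complex.add_re, Complex.mul_re, Complex.mul_im]
    linear_combination h1
  · simp [pow_two, Complex.add_im, Complex.mul_re, Complex.mul_im]
    linear_combination h2

lemma partB_forward (a₀ a₁ a₂ a₃ p q r : ℝ) (h₀ : 0 < a₀)
    (ha1 : a₁ = p - a₀*r) (ha2 : a₂ = q - p*r) (ha3 : a₃ = -(q*r))
    (hrneg : r < 0) (hppos : 0 < p) (hqpos : 0 < q) :
    0 < a₁ ∧ 0 < a₂ ∧ 0 < a₃ ∧ a₁ * a₂ > a₀ * a₃ := by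
  have hnr : 0 < -r := by linarith
  have e : a₁*a₂ - a₀*a₃ = p*q + p*p*(-r) + a₀*(p*((-r)*(-r))) := by
    rw [ha1, ha2, ha3]; ring
  refine ⟨?_, ?_, ?_, ?_⟩
  · nlinarith [mul_pos h₀ hnr]
  · nlinarith [mul_pos hppos hnr]
  · nlinarith [mul_pos hqpos hnr]
  · nlinarith [e, mul_pos hppos hqpos, mul_pos (mul_pos hppos hppos) hnr,
      mul_pos h₀ (mul_pos hppos (mul_pos hnr hnr))]

lemma partB_backward (a₀ a₁ a₂ a₃ p q r : ℝ) (h₀ : 0 < a₀)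
    (ha1 : a₁ = p - a₀*r) (ha2 : a₂ = q - p*r) (ha3 : a₃ = -(q*r))
    (h1 : 0 < a₁) (h2 : 0 < a₂) (h3 : 0 < a₃) (h4 : a₁ * a₂ > a₀ * a₃) :
    r < 0 ∧ 0 < p ∧ 0 < q := by
  have key : a₁*a₂ - a₀*a₃ = p*(a₂ + a₀*r^2) := by
    rw [ha1, ha2, ha3]; ring
  have hA : 0 < a₂ + a₀*r^2 := by positivity
  have hppos : 0 < p := by
    rcases le_or_gt p 0 with hple | h
    · nlinarith [mul_nonneg (neg_nonneg.mpr hple) hA.le]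
    · exact h
  have hrneg : r < 0 := by
    rcases lt_or_ge r 0 with h | h
    · exact h
    · exfalso
      have hpr : 0 ≤ p*r := mul_nonneg hppos.le h
      have hq' : 0 < q := by nlinarith
      nlinarith [mul_nonneg hq'.le h]
  have hqpos : 0 < q := by
    rcases lt_or_ge 0 q with h | h
    · exact h
    · exfalso
      nlinarith [mul_nonneg (neg_nonneg.mpr h) (neg_nonneg.mpr hrneg.le)]
  exact ⟨hrneg, hppos, hqpos⟩

theorem routh_hurwitz_cubic (a₀ a₁ a₂ a₃ : ℝ) (h₀ : 0 < a₀) :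
    (∀ z : ℂ, (a₀:ℂ) * z^3 + (a₁:ℂ) * z^2 + (a₂:ℂ) * z + (a₃:ℂ) = 0 → z.re < 0) ↔
    (0 < a₁ ∧ 0 < a₂ ∧ 0 < a₃ ∧ a₁ * a₂ > a₀ * a₃) := by
  obtain ⟨r, hr⟩ := cubic_real_root a₀ a₁ a₂ a₃ h₀
  obtain ⟨p, q, hp, hq⟩ : ∃ p q : ℝ, p = a₁ + a₀*r ∧ q = a₂ + a₁*r + a₀*r^2 :=
    ⟨_, _, rfl, rfl⟩
  have ha1 : a₁ = p - a₀*r := by linarith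
  have ha2 : a₂ = q - p*r := by rw [hq, hp]; ring
  have ha3 : a₃ = -(q*r) := by rw [hq]; linear_combination hr
  have hrC : (a₀:ℂ) * (r:ℂ)^3 + (a₁:ℂ) * (r:ℂ)^2 + (a₂:ℂ) * (r:ℂ) + (a₃:ℂ) = 0 := by
    exact_mod_cast hr
  have hfact : ∀ z : ℂ, (a₀:ℂ) * z^3 + (a₁:ℂ) * z^2 + (a₂:ℂ) * z + (a₃:ℂ)
      = (z - (r:ℂ)) * ((a₀:ℂ) * z^2 + (p:ℂ) * z + (q:ℂ)) := by
    intro z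
    have hqC : (q:ℂ) = (a₂:ℂ) + (a₁:ℂ)*(r:ℂ) + (a₀:ℂ)*(r:ℂ)^2 := by
      exact_mod_cast congrArg (Complex.ofReal) hq
    have hpC : (p:ℂ) = (a₁:ℂ) + (a₀:ℂ)*(r:ℂ) := by
      exact_mod_cast congrArg (Complex.ofReal) hp
    rw [hqC, hpC]
    linear_combination hrC
  have core : (∀ z : ℂ, (a₀:ℂ) * z^3 + (a₁:ℂ) * z^2 + (a₂:ℂ) * z + (a₃:ℂ) = 0 → z.re < 0)
      ↔ (r < 0 ∧ 0 < p ∧ 0 < q) := by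
    constructor
    · intro H
      have hrneg : r < 0 := by simpa using H r hrC
      rcases le_or_gt 0 (p^2 - 4*a₀*q) with hD | hD
      · -- real roots of the quadratic
        set s := Real.sqrt (p^2 - 4*a₀*q) with hs_def
        have hs : s^2 = p^2 - 4*a₀*q := Real.sq_sqrt hD
        have hs0 : 0 ≤ s := Real.sqrt_nonneg _
        have h2a : (2*a₀) ≠ 0 := by positivity
        have hroot : ∀ x : ℝ, a₀*x^2 + p*x + q = 0 → x < 0 := by
          intro x hx
          have : ((x:ℝ):ℂ).re < 0 := by
            apply H
            rw [hfact]
            apply mul_eq_zero_of_right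
            exact_mod_cast hx
          simpa using this
        have hx₁ : a₀*((-p + s)/(2*a₀))^2 + p*((-p + s)/(2*a₀)) + q = 0 := by
          field_simp
          nlinarith [hs]
        have hx₂ : a₀*((-p - s)/(2*a₀))^2 + p*((-p - s)/(2*a₀)) + q = 0 := by
          field_simp
          nlinarith [hs]
        have hx₁R := hroot _ hx₁
        have hx₂R := hroot _ hx₂
        have e₁ : -p + s < 0 := by
          have := mul_neg_of_neg_of_pos hx₁R (by positivity : (0:ℝ) < 2*a₀)
          rwa [div_mul_cancel₀ _ h2a] at this
        have hppos : 0 < p := by linarith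
        have hqpos : 0 < q := by nlinarith
        exact ⟨hrneg, hppos, hqpos⟩
      · -- complex conjugate pair
        set t := Real.sqrt (4*a₀*q - p^2) with ht_def
        have ht : t^2 = 4*a₀*q - p^2 := Real.sq_sqrt (by linarith)
        have h2a : (2*a₀) ≠ 0 := by positivity
        obtain ⟨u, v, hu_def, hv_def⟩ : ∃ u v : ℝ, u = (-p)/(2*a₀) ∧ v = t/(2*a₀) :=
          ⟨_, _, rfl, rfl⟩
        have e1 : a₀*(u^2 - v^2) + p*u + q = 0 := by
          rw [hu_def, hv_def]
          field_simp
          nlinarith [ht]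
        have e2 : v*(2*a₀*u + p) = 0 := by
          rw [hu_def]
          have : 2*a₀*((-p)/(2*a₀)) + p = 0 := by
            field_simp
            ring
          rw [this, mul_zero]
        have hzroot := quad_complex_root a₀ p q u v e1 e2
        have hzre : ((u:ℂ) + (v:ℂ)*Complex.I).re = u := by simp
        have huneg : u < 0 := by
          have : ((u:ℂ) + (v:ℂ)*Complex.I).re < 0 := by
            apply H
            rw [hfact]
            exact mul_eq_zero_of_right _ hzroot
          rwa [hzre] at this
        have hppos : 0 < p := by
          rw [hu_def] at huneg
          have := mul_neg_of_neg_of_pos huneg (by positivity : (0:ℝ) < 2*a₀)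
          rw [div_mul_cancel₀ _ h2a] at this
          linarith
        have hqpos : 0 < q := by nlinarith
        exact ⟨hrneg, hppos, hqpos⟩
    · rintro ⟨hrneg, hppos, hqpos⟩ z hz
      rw [hfact] at hz
      rcases mul_eq_zero.mp hz with h | h
      · have : z = (r:ℂ) := by linear_combination h
        rw [this]
        simpa using hrneg
      · have h1 : a₀ * (z.re^2 - z.im^2) + p * z.re + q = 0 := by
          have := congrArg Complex.re h
          simp [pow_two, Complex.add_re, Complex.mul_re, Complex.mul_im] at this
          linear_combination this
        have h2 : (2*a₀*z.re + p) * z.im = 0 := by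
          have := congrArg Complex.im h
          simp [pow_two, Complex.add_im, Complex.mul_re, Complex.mul_im] at this
          linear_combination this
        rcases mul_eq_zero.mp h2 with h3 | h3
        · nlinarith
        · rw [h3] at h1
          by_contra hcon
          push_neg at hcon
          nlinarith [sq_nonneg z.re, mul_nonneg hppos.le hcon]
  rw [core]
  constructor
  · rintro ⟨hrneg, hppos, hqpos⟩
    exact partB_forward a₀ a₁ a₂ a₃ p q r h₀ ha1 ha2 ha3 hrneg hppos hqpos
  · rintro ⟨h1, h2, h3, h4⟩
    exact partB_backward a₀ a₁ a₂ a₃ p q r h₀ ha1 ha2 ha3 h1 h2 h3 h4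
end

section
/- Suppose β, γ, μ, ε > 0 and α ∈ (0,1) satisfy (βγ/μ + (1-α))·(γμ/ε + 1) > 1, so that A⁻ (as defined with parameter α) is Hurwitz. Then for any α₀ with 0 < α₀ ≤ α, the matrix A⁻ with α replaced by α₀ is also Hurwitz. -/
theorem Aminus_hurwitz_mono (α β γ μ ε : ℝ) (hβ : 0 < β) (hγ : 0 < γ) (hμ : 0 < μ)
    (hε : 0 < ε) (hα : α ∈ Set.Ioo (0:ℝ) 1)
    (hcond : (β*γ/μ + (1-α)) * (γ*μ/ε + 1) > 1) :
    ∀ α₀ : ℝ, 0 < α₀ → α₀ ≤ α →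
    ∀ z ∈ spectrum ℂ
      ((!![-γ*β, -(1/2)*γ*α₀*μ - ε, -(1/2)*γ*α₀*μ;
           β, (1/2)*α₀*μ, (1/2)*α₀*μ;
           β, (1/2)*(α₀-2)*μ, (1/2)*(α₀-2)*μ] : Matrix (Fin 3) (Fin 3) ℝ).map
        (Complex.ofReal)),
      z.re < 0 := by
  obtain ⟨hα0, hα1⟩ := hα
  intro α₀ h₀ hle z hz
  -- turn spectrum membership into the cubic equation
  rw [spectrum.mem_iff] at hz
  rw [Matrix.isUnit_iff_isUnit_det, isUnit_iff_ne_zero, ne_eq, not_not,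
    Matrix.det_fin_three] at hz
  simp [Matrix.map_apply, Matrix.algebraMap_matrix_apply, Matrix.one_apply,
    Matrix.vecHead, Matrix.vecTail] at hz
  set A : ℝ := γ*β + (1-α₀)*μ with hA
  set B : ℝ := β*(γ*μ+ε) with hB
  set C : ℝ := β*ε*μ with hC
  have hcubic : z^3 + (A:ℂ)*z^2 + (B:ℂ)*z + (C:ℂ) = 0 := by
    rw [hA, hB, hC]
    push_cast
    linear_combination hz
  have hApos : 0 < A := by
    have : 0 < 1 - α₀ := by linarith
    have := mul_pos hγ hβ
    nlinarith
  have hBpos : 0 < B := by positivity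
  have hCpos : 0 < C := by positivity
  have hRH : A*B > C := by
    have h1 : (β*γ + (1-α)*μ) * (γ*μ + ε) > ε*μ := by
      have h2 : (β*γ/μ + (1-α)) * (γ*μ/ε + 1) * (μ*ε) > 1 * (μ*ε) := by
        apply mul_lt_mul_of_pos_right hcond (by positivity)
      calc (β*γ + (1-α)*μ) * (γ*μ + ε)
          = (β*γ/μ + (1-α)) * (γ*μ/ε + 1) * (μ*ε) := by field_simp
        _ > 1 * (μ*ε) := h2
        _ = ε*μ := by ring
    have h3 : (β*γ + (1-α₀)*μ) * (γ*μ + ε) ≥ (β*γ + (1-α)*μ) * (γ*μ + ε) := by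
      apply mul_le_mul_of_nonneg_right _ (by positivity)
      nlinarith
    have h4 : (β*γ + (1-α₀)*μ) * (γ*μ + ε) > ε*μ := lt_of_lt_of_le h1 h3
    have : A*B = β * ((β*γ + (1-α₀)*μ) * (γ*μ + ε)) := by rw [hA, hB]; ring
    rw [this, hC]
    nlinarith
  -- now extract real and imaginary parts
  by_contra hre
  push_neg at hre
  set x := z.re with hx
  set y := z.im with hy
  have hzxy : z = Complex.mk x y := by rfl
  have hRe : x^3 - 3*x*y^2 + A*(x^2 - y^2) + B*x + C = 0 := by
    have := congrArg Complex.re hcubic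
    simp [hzxy, pow_succ, Complex.ext_iff, Complex.add_re, Complex.mul_re,
      Complex.mul_im, Complex.ofReal_re, Complex.ofReal_im] at this
    linarith [this]
  have hIm : y * (3*x^2 - y^2 + 2*A*x + B) = 0 := by
    have := congrArg Complex.im hcubic
    simp [hzxy, pow_succ, Complex.add_im, Complex.mul_re,
      Complex.mul_im, Complex.ofReal_re, Complex.ofReal_im] at this
    linarith [this]
  rcases mul_eq_zero.mp hIm with hy0 | hq
  · -- real root: x^3 + A x^2 + B x + C = 0 with x ≥ 0, impossible
    rw [hy0] at hRe
    nlinarith [hCpos, sq_nonneg x,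
      mul_nonneg (mul_nonneg hre hre) hre,
      mul_nonneg hApos.le (mul_nonneg hre hre),
      mul_nonneg hBpos.le hre]
  · have hy2 : y^2 = 3*x^2 + 2*A*x + B := by linarith
    have key : 8*x^3 + 8*A*x^2 + 2*(B + A^2)*x + (A*B - C) = 0 := by
      linear_combination -hRe - (3*x + A) * hy2
    have t1 : (0:ℝ) ≤ 8*x^3 := by positivity
    have t2 : (0:ℝ) ≤ 8*A*x^2 := by positivity
    have t3 : (0:ℝ) ≤ 2*(B + A^2)*x := by positivity
    linarith
end

section
/- Let β, γ, μ, ε > 0 and α ∈ (0,1) with ε < βγ²/2 - αγμ/2 and γ > αμ/β. Then for every τ ≥ 0, β²ε²μ²τ³ + (β²ε² + β²γ²μ² - 2βεμ² + αβεμ²)τ² + (μ² - αμ² + β²γ² - 2βε - αβγμ)τ + 1 > 0. -/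
theorem cubic_in_tau_pos (α β γ μ ε : ℝ) (hβ : 0 < β) (hγ : 0 < γ) (hμ : 0 < μ)
    (hε : 0 < ε) (hα : α ∈ Set.Ioo (0:ℝ) 1)
    (h1 : ε < β*γ^2/2 - α*γ*μ/2) (h2 : γ > α*μ/β) :
    ∀ τ : ℝ, 0 ≤ τ →
      β^2*ε^2*μ^2*τ^3 + (β^2*ε^2 + β^2*γ^2*μ^2 - 2*β*ε*μ^2 + α*β*ε*μ^2)*τ^2
        + (μ^2 - α*μ^2 + β^2*γ^2 - 2*β*ε - α*β*γ*μ)*τ + 1 > 0 := by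
  obtain ⟨hα0, hα1⟩ := hα
  intro τ hτ
  have key : 2*β*ε < β^2*γ^2 - α*β*γ*μ := by nlinarith
  have c3 : 0 < β^2*ε^2*μ^2 := by positivity
  have c2 : 0 < β^2*ε^2 + β^2*γ^2*μ^2 - 2*β*ε*μ^2 + α*β*ε*μ^2 := by
    nlinarith [mul_lt_mul_of_pos_right key (by positivity : (0:ℝ) < μ^2),
      mul_pos (mul_pos (mul_pos hα0 hβ) (mul_pos hγ hμ)) (by positivity : (0:ℝ) < μ^2),
      mul_pos (mul_pos (mul_pos hα0 hβ) hε) (by positivity : (0:ℝ) < μ^2), sq_nonneg (β*ε)]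
  have c1 : 0 < μ^2 - α*μ^2 + β^2*γ^2 - 2*β*ε - α*β*γ*μ := by nlinarith [sq_nonneg μ, mul_pos hα0 (by positivity : (0:ℝ) < μ^2)]
  nlinarith [mul_nonneg (mul_nonneg (le_of_lt c3) hτ) (mul_nonneg hτ hτ), mul_nonneg (le_of_lt c2) (mul_nonneg hτ hτ), mul_nonneg (le_of_lt c1) hτ]
end

section
/- Let β, γ, μ, ε > 0 and α ∈ (0,1) satisfy βγ²/4 < ε < βγ²/2, ε > βγ²/2 - (αγμ/2 - (1-α)μ²/(2β)), and γ > (1-α)μ/(αβ). Set b = -(μ² - αμ² + β²γ² - 2βε - αβγμ) and c = β²ε² + β²γ²μ² - 2βεμ² + αβεμ². Then b > 0 and b² - 4c < 0. -/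
set_option maxHeartbeats 1000000 in
theorem b_pos_and_disc (α β γ μ ε : ℝ) (hβ : 0 < β) (hγ : 0 < γ) (hμ : 0 < μ)
    (hε : 0 < ε) (hα : α ∈ Set.Ioo (0:ℝ) 1)
    (h1 : β*γ^2/4 < ε) (h2 : ε < β*γ^2/2)
    (h3 : ε > β*γ^2/2 - (α*γ*μ/2 - (1-α)*μ^2/(2*β)))
    (h4 : γ > (1-α)*μ/(α*β)) :
    0 < -(μ^2 - α*μ^2 + β^2*γ^2 - 2*β*ε - α*β*γ*μ) ∧
    (-(μ^2 - α*μ^2 + β^2*γ^2 - 2*β*ε - α*β*γ*μ))^2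
      - 4*(β^2*ε^2 + β^2*γ^2*μ^2 - 2*β*ε*μ^2 + α*β*ε*μ^2) < 0 := by
  obtain ⟨hα0, hα1⟩ := hα
  have hαβ : 0 < α*β := mul_pos hα0 hβ
  have h4' : (1-α)*μ < γ*(α*β) := (div_lt_iff₀ hαβ).mp h4
  have hP : 0 < α*β*γ*μ - (1-α)*μ^2 := by nlinarith [mul_lt_mul_of_pos_right h4' hμ]
  have hdiv : (1-α)*μ^2/(2*β)*(2*β) = (1-α)*μ^2 := by field_simp
  have h3' : 2*β*ε > β^2*γ^2 - α*β*γ*μ + (1-α)*μ^2 := by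
    have := mul_lt_mul_of_pos_right h3 (by linarith : (0:ℝ) < 2*β)
    nlinarith [this, hdiv]
  have hA : 0 < β*γ^2 - 2*ε := by linarith
  have hμ2 : (0:ℝ) < μ^2 := by positivity
  have hQ : (0:ℝ) < β^2*γ^2 := by positivity
  constructor
  · nlinarith [h3']
  · have hDhi : (α*β*γ*μ - (1-α)*μ^2)^2 - (β^2*γ^2)^2 - 2*α*(β^2*γ^2)*μ^2 < 0 := by
      nlinarith [mul_pos (mul_pos hα0 hQ) hμ2,
        mul_pos (mul_pos (sub_pos.mpr hα1) hμ2)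
          (by nlinarith [mul_pos (mul_pos (mul_pos hα0 hβ) hγ) hμ] :
            (0:ℝ) < (α*β*γ*μ - (1-α)*μ^2) + α*β*γ*μ),
        sq_nonneg (α*μ), mul_pos hQ hμ2]
    have hDE3 : -((α*β*γ*μ - (1-α)*μ^2) - β^2*γ^2)^2
        - 2*μ^2*(α*(β^2*γ^2) + (2-α)*(α*β*γ*μ - (1-α)*μ^2)) < 0 := by
      nlinarith [sq_nonneg ((α*β*γ*μ - (1-α)*μ^2) - β^2*γ^2),
        mul_pos hμ2 (mul_pos hα0 hQ),
        mul_pos hμ2 (mul_pos (by linarith : (0:ℝ) < 2-α) hP)]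
    have hB : 0 < 2*β*ε - (β^2*γ^2 - α*β*γ*μ + (1-α)*μ^2) := by linarith
    have hid1 : (-(μ^2 - α*μ^2 + β^2*γ^2 - 2*β*ε - α*β*γ*μ))^2
        - 4*(β^2*ε^2 + β^2*γ^2*μ^2 - 2*β*ε*μ^2 + α*β*ε*μ^2)
        = ((α*β*γ*μ - (1-α)*μ^2)^2 - (β^2*γ^2)^2 - 2*α*(β^2*γ^2)*μ^2)
          - 2*β*(α*β*γ*μ + μ^2 - β^2*γ^2)*(β*γ^2 - 2*ε) := by ring
    have hid2 : (-(μ^2 - α*μ^2 + β^2*γ^2 - 2*β*ε - α*β*γ*μ))^2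
        - 4*(β^2*ε^2 + β^2*γ^2*μ^2 - 2*β*ε*μ^2 + α*β*ε*μ^2)
        = (-((α*β*γ*μ - (1-α)*μ^2) - β^2*γ^2)^2
            - 2*μ^2*(α*(β^2*γ^2) + (2-α)*(α*β*γ*μ - (1-α)*μ^2)))
          + 2*(α*β*γ*μ + μ^2 - β^2*γ^2)*(2*β*ε - (β^2*γ^2 - α*β*γ*μ + (1-α)*μ^2)) := by
      ring
    rcases le_or_gt 0 (α*β*γ*μ + μ^2 - β^2*γ^2) with hM | hM
    · have := mul_nonneg (mul_nonneg hβ.le hM) hA.le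
      rw [hid1]; linarith [this, hDhi]
    · have := mul_pos (neg_pos.mpr hM) hB
      rw [hid2]; linarith [this, hDE3]
end

section
/- Let β, γ, μ, ε > 0 and α ∈ (0,1) satisfy either (i) βγ²/4 < ε < βγ²/2, ε > βγ²/2 - (αγμ/2 - (1-α)μ²/(2β)), and γ > (1-α)μ/(αβ), or (ii) ε < βγ²/2 - αγμ/2 and γ > αμ/β. Then the matrix product A⁺A⁻ has no negative real eigenvalues. -/
set_option maxHeartbeats 1000000 in
private lemma aux_case1 (α x μ u s : ℝ) (hα0 : 0 < α) (hα1 : α < 1)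
    (hμ : 0 < μ) (hx : 0 < x) (hp : (1-α)*μ ≤ α*x)
    (hs : s = μ*(α*x-(1-α)*μ)) (hu0 : u < 0) (hus : -s < u) :
    (u+s)^2 ≤ (u+x^2)^2 + 4*x^2*μ^2 - 2*(2-α)*μ^2*(u+x^2) := by
  have hspos : 0 < s := by
    have h0 : 0 < α*x - (1-α)*μ := by
      rcases lt_or_eq_of_le hp with h | h
      · linarith
      · exfalso; rw [hs, ← h] at hus; nlinarith
    rw [hs]; positivity
  have hG0 : 0 ≤ x^4 - s^2 + 2*α*x^2*μ^2 := by
    have hsle : s ≤ α*x*μ := by rw [hs]; nlinarith [sq_nonneg μ]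
    nlinarith [mul_self_le_mul_self (le_of_lt hspos) hsle, sq_nonneg (x^2),
      mul_nonneg (mul_nonneg (mul_nonneg hα0.le (by linarith : (0:ℝ) ≤ 2-α)) (sq_nonneg x)) (sq_nonneg μ)]
  have hGms : 0 ≤ (x^2-s)^2 + 4*x^2*μ^2 - 2*(2-α)*μ^2*(x^2-s) := by
    have t1 : 0 ≤ (x^2 - α*x*μ)^2 := sq_nonneg _
    have t2 : 0 ≤ (1-α^2)*x^2*μ^2 := by
      have ha2 : (0:ℝ) ≤ 1-α^2 := by nlinarith
      exact mul_nonneg (mul_nonneg ha2 (sq_nonneg x)) (sq_nonneg μ)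
    have t3 : 0 ≤ μ^2*((α*x)^2 - ((1-α)*μ)^2) := by
      have h33 : 0 ≤ (α*x - (1-α)*μ)*(α*x + (1-α)*μ) := by
        apply mul_nonneg (by linarith); nlinarith
      nlinarith [sq_nonneg μ]
    have t4 : 0 ≤ x^2*μ^2 := by positivity
    have t5 : 0 ≤ 2*μ^3*(α*x - (1-α)*μ) := by
      apply mul_nonneg (by positivity); linarith
    rw [hs]; nlinarith
  have hkey : s * (((u+x^2)^2 + 4*x^2*μ^2 - 2*(2-α)*μ^2*(u+x^2)) - (u+s)^2)
      = (s+u)*(x^4 - s^2 + 2*α*x^2*μ^2)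
        + (-u)*((x^2-s)^2 + 4*x^2*μ^2 - 2*(2-α)*μ^2*(x^2-s)) := by
    ring
  have hA : 0 ≤ (s+u)*(x^4 - s^2 + 2*α*x^2*μ^2) := mul_nonneg (by linarith) hG0
  have hB : 0 ≤ (-u)*((x^2-s)^2 + 4*x^2*μ^2 - 2*(2-α)*μ^2*(x^2-s)) :=
    mul_nonneg (by linarith) hGms
  nlinarith [hkey, hA, hB, hspos]

set_option maxHeartbeats 1000000 in
private lemma aux_cubic (α β γ μ ε l : ℝ)
    (hβ : 0 < β) (hγ : 0 < γ) (hμ : 0 < μ) (hε : 0 < ε)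
    (hα0 : 0 < α) (hα1 : α < 1)
    (hcond : (β*γ^2/4 < ε ∧ ε < β*γ^2/2 ∧
              ε > β*γ^2/2 - (α*γ*μ/2 - (1-α)*μ^2/(2*β)) ∧
              γ > (1-α)*μ/(α*β)) ∨
             (ε < β*γ^2/2 - α*γ*μ/2 ∧ γ > α*μ/β)) (hl : l < 0) :
    l^3 + (2*β*ε - β^2*γ^2 + α*β*γ*μ - (1-α)*μ^2)*l^2
      + (β^2*ε^2 + β^2*γ^2*μ^2 - (2-α)*β*μ^2*ε)*l - β^2*μ^2*ε^2 < 0 := by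
  have hεlt : ε < β*γ^2/2 := by
    rcases hcond with ⟨_, h, _, _⟩ | ⟨h, _⟩
    · exact h
    · nlinarith [mul_pos (mul_pos hα0 hγ) hμ]
  have hc1pos : 0 < β^2*ε^2 + β^2*γ^2*μ^2 - (2-α)*β*μ^2*ε := by
    have h1 : (2-α)*ε < β*γ^2 := by nlinarith [mul_pos hα0 hε]
    have h2 : 0 < β*μ^2*(β*γ^2 - (2-α)*ε) :=
      mul_pos (mul_pos hβ (pow_pos hμ 2)) (by linarith)
    nlinarith [sq_nonneg (β*ε)]
  have hd : 0 < β^2*μ^2*ε^2 := by positivity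
  have h4 : (2*β*ε - β^2*γ^2 + α*β*γ*μ - (1-α)*μ^2)^2
        ≤ 4*(β^2*ε^2 + β^2*γ^2*μ^2 - (2-α)*β*μ^2*ε) ∨
      (2*β*ε - β^2*γ^2 + α*β*γ*μ - (1-α)*μ^2) < 0 := by
    rcases hcond with ⟨h1, h2, h3, h5⟩ | ⟨h1, h2⟩
    · left
      have hαβ : 0 < α*β := by positivity
      rw [gt_iff_lt, div_lt_iff₀ hαβ] at h5
      have hp : (1-α)*μ ≤ α*(β*γ) := by nlinarith
      have hx : 0 < β*γ := by positivity
      have hu0 : 2*β*ε - (β*γ)^2 < 0 := by nlinarith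
      have hus : -(μ*(α*(β*γ)-(1-α)*μ)) < 2*β*ε - (β*γ)^2 := by
        have h3' : β*γ^2/2 - (α*γ*μ/2 - (1-α)*μ^2/(2*β)) < ε := h3
        have hb2 : (0:ℝ) < 2*β := by linarith
        have e2 : ((1-α)*μ^2/(2*β))*(2*β) = (1-α)*μ^2 := by field_simp
        nlinarith [mul_lt_mul_of_pos_right h3' hb2]
      have := aux_case1 α (β*γ) μ (2*β*ε - (β*γ)^2) (μ*(α*(β*γ)-(1-α)*μ))
        hα0 hα1 hμ hx hp rfl hu0 hus
      nlinarith [this]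
    · right
      have hb2 : (0:ℝ) < 2*β := by linarith
      nlinarith [mul_lt_mul_of_pos_right h1 hb2, mul_pos hμ hμ, sq_nonneg μ]
  rcases h4 with h4 | h4
  · have hml : (0:ℝ) ≤ -l := by linarith
    nlinarith [mul_nonneg (sq_nonneg (2*l+(2*β*ε - β^2*γ^2 + α*β*γ*μ - (1-α)*μ^2))) hml,
      mul_nonneg (sub_nonneg.mpr h4) hml]
  · nlinarith [mul_pos (mul_pos (neg_pos.mpr hl) (neg_pos.mpr hl)) (neg_pos.mpr hl),
      mul_pos hc1pos (neg_pos.mpr hl),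
      mul_pos (neg_pos.mpr h4) (mul_pos (neg_pos.mpr hl) (neg_pos.mpr hl))]

set_option maxHeartbeats 1000000 in
theorem Aplus_Aminus_no_neg_eigenvalues (α β γ μ ε : ℝ)
    (hβ : 0 < β) (hγ : 0 < γ) (hμ : 0 < μ) (hε : 0 < ε)
    (hα : α ∈ Set.Ioo (0:ℝ) 1)
    (hcond : (β*γ^2/4 < ε ∧ ε < β*γ^2/2 ∧
              ε > β*γ^2/2 - (α*γ*μ/2 - (1-α)*μ^2/(2*β)) ∧
              γ > (1-α)*μ/(α*β)) ∨
             (ε < β*γ^2/2 - α*γ*μ/2 ∧ γ > α*μ/β)) :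
    ∀ l : ℝ, l < 0 →
      l ∉ spectrum ℝ
        ((!![-γ*β, (1/2)*γ*α*μ - ε, -(1/2)*γ*α*μ;
             β, -(1/2)*α*μ, (1/2)*α*μ;
             β, -(1/2)*(α-2)*μ, (1/2)*(α-2)*μ] : Matrix (Fin 3) (Fin 3) ℝ) *
         !![-γ*β, -(1/2)*γ*α*μ - ε, -(1/2)*γ*α*μ;
            β, (1/2)*α*μ, (1/2)*α*μ;
            β, (1/2)*(α-2)*μ, (1/2)*(α-2)*μ]) := by
  obtain ⟨hα0, hα1⟩ := hα
  intro l hl hmem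
  rw [spectrum.mem_iff] at hmem
  apply hmem
  rw [Matrix.isUnit_iff_isUnit_det]
  apply isUnit_iff_ne_zero.mpr
  have hdet : ((algebraMap ℝ (Matrix (Fin 3) (Fin 3) ℝ)) l -
      ((!![-γ*β, (1/2)*γ*α*μ - ε, -(1/2)*γ*α*μ;
             β, -(1/2)*α*μ, (1/2)*α*μ;
             β, -(1/2)*(α-2)*μ, (1/2)*(α-2)*μ] : Matrix (Fin 3) (Fin 3) ℝ) *
         !![-γ*β, -(1/2)*γ*α*μ - ε, -(1/2)*γ*α*μ;
            β, (1/2)*α*μ, (1/2)*α*μ;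
            β, (1/2)*(α-2)*μ, (1/2)*(α-2)*μ])).det
      = l^3 + (2*β*ε - β^2*γ^2 + α*β*γ*μ - (1-α)*μ^2)*l^2
        + (β^2*ε^2 + β^2*γ^2*μ^2 - (2-α)*β*μ^2*ε)*l - β^2*μ^2*ε^2 := by
    rw [Matrix.mul_fin_three]
    show ((Matrix.scalar (Fin 3)) l - _).det = _
    simp [Matrix.det_fin_three, Matrix.scalar_apply, Matrix.sub_apply,
      Matrix.diagonal_apply, Matrix.vecHead, Matrix.vecTail]
    ring
  rw [hdet]
  exact ne_of_lt (aux_cubic α β γ μ ε l hβ hγ hμ hε hα0 hα1 hcond hl)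
end
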